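/- arXiv:2411.05463 — 11 statements merged into one kernel-verified Lean document; each statement's English description precedes it below -/
import Mathlib

section
/- Let q ∈ (0,1) be real, p = 1 − q, and N ≥ 0 real. Suppose d : ℕ → ℤ → ℝ satisfies: d 0 0 = N and d 0 k = 0 for all k ≠ 0; d j k = 0 whenever k < 0; for every j ≥ 1, d j 0 ≤ q·(d (j−1) 0) + p; and for every j ≥ 1 and every k ≥ 1, d j k ≤ p·(d (j−1) (k−1)) + q·(d (j−1) k) + 4p. Then for all j ≥ 0 and all k ≥ 0, d j k ≤ N·(choose j k)·p^k·q^(j−k) + 4k + 1, where (choose j k) denotes the binomial coefficient (equal to 0 when k > j). -/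
private lemma dave_key (p q N : ℝ) (n m : ℕ) (hm : 1 ≤ m) :
    p * (N * (Nat.choose n (m - 1) : ℝ) * p ^ (m - 1) * q ^ (n - (m - 1)))
      + q * (N * (Nat.choose n m : ℝ) * p ^ m * q ^ (n - m))
      = N * (Nat.choose (n + 1) m : ℝ) * p ^ m * q ^ (n + 1 - m) := by
  obtain ⟨m', rfl⟩ : ∃ m', m = m' + 1 := ⟨m - 1, by omega⟩
  simp only [Nat.add_sub_cancel]
  by_cases hle : m' + 1 ≤ n
  case neg =>
    by_cases heq : m' = n
    · subst heq
      simp [Nat.choose_self, Nat.choose_eq_zero_of_lt (Nat.lt_succ_self m'),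
        Nat.sub_self]
      ring
    · rw [Nat.choose_eq_zero_of_lt (by omega), Nat.choose_eq_zero_of_lt (by omega),
        Nat.choose_eq_zero_of_lt (by omega)]
      ring
  · -- m' + 1 ≤ n
    have e1 : n - m' = n - (m' + 1) + 1 := by omega
    have e2 : n + 1 - (m' + 1) = n - (m' + 1) + 1 := by omega
    rw [e1, e2, Nat.choose_succ_succ n m']
    push_cast
    ring

/-- iterating the demotion recurrence yields the binomial-plus-ramp bound. -/
theorem dave_ramp_binomial_bound
    (q p N : ℝ) (hq0 : 0 < q) (hq1 : q < 1) (hp : p = 1 - q) (hN : 0 ≤ N)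
    (d : ℕ → ℤ → ℝ)
    (h00 : d 0 0 = N)
    (h0k : ∀ k : ℤ, k ≠ 0 → d 0 k = 0)
    (hneg : ∀ (j : ℕ) (k : ℤ), k < 0 → d j k = 0)
    (hrec0 : ∀ j : ℕ, 1 ≤ j → d j 0 ≤ q * d (j - 1) 0 + p)
    (hrec : ∀ (j : ℕ) (k : ℤ), 1 ≤ j → 1 ≤ k →
      d j k ≤ p * d (j - 1) (k - 1) + q * d (j - 1) k + 4 * p) :
    ∀ (j : ℕ) (k : ℤ), 0 ≤ k →
      d j k ≤ N * (Nat.choose j k.toNat : ℝ) * p ^ k.toNat * q ^ (j - k.toNat)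
        + 4 * (k : ℝ) + 1 := by
  have hp0 : 0 < p := by rw [hp]; linarith
  intro j
  induction j with
  | zero =>
    intro k hk
    rcases eq_or_lt_of_le hk with h0 | hpos
    · rw [← h0]
      simp [h00]
    · rw [h0k k (by omega)]
      rw [Nat.choose_eq_zero_of_lt (by omega)]
      have : (1:ℝ) ≤ (k:ℝ) := by exact_mod_cast hpos
      simp only [Nat.cast_zero, mul_zero, zero_mul]
      linarith
  | succ n ih =>
    intro k hk
    rcases eq_or_lt_of_le hk with h0 | hpos
    · -- k = 0
      rw [← h0]
      have h1 := hrec0 (n + 1) (by omega)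
      simp only [Nat.add_sub_cancel] at h1
      have h2 := ih 0 le_rfl
      simp only [Int.toNat_zero, Nat.choose_zero_right, Nat.cast_one, pow_zero,
        Nat.sub_zero, Int.cast_zero] at h2 ⊢
      have := mul_le_mul_of_nonneg_left h2 hq0.le
      calc d (n + 1) 0 ≤ q * d n 0 + p := h1
        _ ≤ q * (N * 1 * 1 * q ^ n + 4 * 0 + 1) + p := by linarith
        _ ≤ N * 1 * 1 * q ^ (n + 1) + 4 * 0 + 1 := by
              apply le_of_eq
              rw [hp]; ring
    · -- k ≥ 1
      have hk1 : 1 ≤ k := hpos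
      have h1 := hrec (n + 1) k (by omega) hk1
      simp only [Nat.add_sub_cancel] at h1
      have hA := ih (k - 1) (by omega)
      have hB := ih k hk
      set m := k.toNat with hm
      have hm1 : 1 ≤ m := by omega
      have hkt : (k - 1).toNat = m - 1 := by omega
      rw [hkt] at hA
      have hck : ((k : ℝ) - 1) = ((k - 1 : ℤ) : ℝ) := by push_cast; ring
      rw [Int.cast_sub, Int.cast_one] at hA
      have key := dave_key p q N n m hm1
      have hAp := mul_le_mul_of_nonneg_left hA hp0.le
      have hBq := mul_le_mul_of_nonneg_left hB hq0.le
      have hpq : p + q = 1 := by rw [hp]; ring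
      calc d (n + 1) k ≤ p * d n (k - 1) + q * d n k + 4 * p := h1
        _ ≤ p * (N * (Nat.choose n (m - 1) : ℝ) * p ^ (m - 1) * q ^ (n - (m - 1))
              + 4 * ((k:ℝ) - 1) + 1)
            + q * (N * (Nat.choose n m : ℝ) * p ^ m * q ^ (n - m) + 4 * (k:ℝ) + 1)
            + 4 * p := by linarith
        _ = N * (Nat.choose (n + 1) m : ℝ) * p ^ m * q ^ (n + 1 - m)
            + 4 * (k:ℝ) * (p + q) + (p + q) + (-4 * p + 4 * p) := by
              rw [← key]; ring
        _ = N * (Nat.choose (n + 1) m : ℝ) * p ^ m * q ^ (n + 1 - m)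
            + 4 * (k:ℝ) + 1 := by rw [hpq]; ring
end

section
/- Let b, u : ℤ → ℝ be finitely supported with b[k] ≥ 0 for all k, and let d : ℕ → (ℤ → ℝ). If for every j ≥ 1 and every k ∈ ℤ, (d j)[k] ≤ (b * d (j−1))[k] + u[k], then for every j ≥ 0 and every k ∈ ℤ, (d j)[k] ≤ (b^{*j} * d 0)[k] + ((Σ_{i=0}^{j−1} b^{*i}) * u)[k]. -/
open Pointwise


/-- Discrete convolution of sequences ℤ → ℝ (well-defined when one factor is
finitely supported; `finsum` is 0 otherwise). -/
noncomputable def dconv (x y : ℤ → ℝ) : ℤ → ℝ :=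
  fun k => ∑ᶠ j : ℤ, x j * y (k - j)

/-- Unit impulse at 0. -/
noncomputable def dimpulse : ℤ → ℝ := fun k => if k = 0 then 1 else 0

/-- j-fold auto-convolution of b, with `dIterConv b 0 = δ₀`. -/
noncomputable def dIterConv (b : ℤ → ℝ) : ℕ → (ℤ → ℝ)
  | 0 => dimpulse
  | j + 1 => dconv b (dIterConv b j)

lemma dconv_eq_sum (x y : ℤ → ℝ) (s : Finset ℤ) (hs : Function.support x ⊆ ↑s) (k : ℤ) :
    dconv x y k = ∑ j ∈ s, x j * y (k - j) := by
  apply finsum_eq_finset_sum_of_support_subset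
  intro j hj
  have : x j ≠ 0 := fun h => by simp [h] at hj
  exact hs this

lemma support_dconv_subset (x y : ℤ → ℝ) :
    Function.support (dconv x y) ⊆ Function.support x + Function.support y := by
  intro k hk
  have : ∃ j, x j * y (k - j) ≠ 0 := by
    by_contra h
    push_neg at h
    have : dconv x y k = 0 := by
      simp only [dconv]
      exact finsum_eq_zero_of_forall_eq_zero h
    exact hk this
  obtain ⟨j, hj⟩ := this
  exact Set.mem_add.mpr ⟨j, fun h => hj (by simp [h]), k - j,
    fun h => hj (by simp [h]), by ring⟩

lemma support_dconv_finite {x y : ℤ → ℝ} (hx : (Function.support x).Finite)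
    (hy : (Function.support y).Finite) : (Function.support (dconv x y)).Finite :=
  (hx.add hy).subset (support_dconv_subset x y)

lemma dconv_dimpulse (y : ℤ → ℝ) (k : ℤ) : dconv dimpulse y k = y k := by
  simp only [dconv]
  rw [finsum_eq_single _ (0 : ℤ)]
  · simp [dimpulse]
  · intro j hj; simp [dimpulse, hj]

lemma dconv_add_right (x f g : ℤ → ℝ) (hx : (Function.support x).Finite) (k : ℤ) :
    dconv x (fun m => f m + g m) k = dconv x f k + dconv x g k := by
  have hsupp : ∀ v : ℤ → ℝ, (Function.support fun j => x j * v j).Finite := by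
    intro v
    apply hx.subset
    intro j hj
    simp only [Function.mem_support] at hj ⊢
    exact fun h => hj (by simp [h])
  simp only [dconv, mul_add]
  exact finsum_add_distrib (hsupp fun j => f (k - j)) (hsupp fun j => g (k - j))

lemma dconv_add_left (f g u : ℤ → ℝ) (hf : (Function.support f).Finite)
    (hg : (Function.support g).Finite) (k : ℤ) :
    dconv (fun m => f m + g m) u k = dconv f u k + dconv g u k := by
  have hsupp : ∀ (v : ℤ → ℝ) (hv : (Function.support v).Finite),
      (Function.support fun j => v j * u (k - j)).Finite := by
    intro v hv
    apply hv.subset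
    intro j hj
    simp only [Function.mem_support] at hj ⊢
    exact fun h => hj (by simp [h])
  simp only [dconv, add_mul]
  exact finsum_add_distrib (hsupp f hf) (hsupp g hg)

lemma dconv_mono (b f g : ℤ → ℝ) (hb : (Function.support b).Finite)
    (hbn : ∀ k, 0 ≤ b k) (hfg : ∀ k, f k ≤ g k) (k : ℤ) :
    dconv b f k ≤ dconv b g k := by
  rw [dconv_eq_sum b f hb.toFinset (by simp) k, dconv_eq_sum b g hb.toFinset (by simp) k]
  exact Finset.sum_le_sum fun j _ => mul_le_mul_of_nonneg_left (hfg _) (hbn j)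

lemma dconv_assoc (x y z : ℤ → ℝ) (hx : (Function.support x).Finite)
    (hy : (Function.support y).Finite) (k : ℤ) :
    dconv (dconv x y) z k = dconv x (dconv y z) k := by
  classical
  set A := hx.toFinset with hA
  set B := hy.toFinset with hB
  have hsupp : Function.support (dconv x y) ⊆ ↑(A + B) := by
    refine (support_dconv_subset x y).trans ?_
    rw [Finset.coe_add]
    exact Set.add_subset_add (by simp [hA]) (by simp [hB])
  rw [dconv_eq_sum _ z (A + B) hsupp k, dconv_eq_sum x _ A (by simp [hA]) k]
  have hxy : ∀ m ∈ A + B, dconv x y m * z (k - m)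
      = ∑ j ∈ A, x j * y (m - j) * z (k - m) := by
    intro m _
    rw [dconv_eq_sum x y A (by simp [hA]) m, Finset.sum_mul]
  rw [Finset.sum_congr rfl hxy, Finset.sum_comm]
  refine Finset.sum_congr rfl fun j hj => ?_
  have hyz : x j * dconv y z (k - j) = ∑ m ∈ B, x j * (y m * z (k - j - m)) := by
    rw [dconv_eq_sum y z B (by simp [hB]) (k - j), Finset.mul_sum]
  rw [hyz]
  -- reindex the right side via m ↦ m + j
  rw [show (∑ m ∈ B, x j * (y m * z (k - j - m)))
      = ∑ m ∈ B.map (addRightEmbedding j), x j * y (m - j) * z (k - m) by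
    rw [Finset.sum_map]
    refine Finset.sum_congr rfl fun m _ => ?_
    simp only [addRightEmbedding_apply, add_sub_cancel_right]
    ring_nf]
  symm
  apply Finset.sum_subset
  · intro m hm
    simp only [Finset.mem_map, addRightEmbedding_apply] at hm
    obtain ⟨m', hm', rfl⟩ := hm
    simpa [add_comm] using Finset.add_mem_add hj hm'
  · intro m _ hm
    have : y (m - j) = 0 := by
      by_contra h
      exact hm (by
        simp only [Finset.mem_map, addRightEmbedding_apply]
        exact ⟨m - j, by simp [hB, Function.mem_support, h], by ring⟩)
    simp [this]

lemma dIterConv_support_finite {b : ℤ → ℝ} (hb : (Function.support b).Finite) :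
    ∀ j, (Function.support (dIterConv b j)).Finite
  | 0 => by
    apply Set.Finite.subset (Set.finite_singleton (0 : ℤ))
    intro k hk
    simp only [dIterConv, dimpulse, Function.mem_support, ne_eq, ite_eq_right_iff,
      one_ne_zero] at hk
    simp [of_not_not fun h => hk fun hk0 => (h hk0).elim]
  | (j + 1) => support_dconv_finite hb (dIterConv_support_finite hb j)

lemma sum_support_finite {f : ℕ → ℤ → ℝ} (hf : ∀ i, (Function.support (f i)).Finite) (n : ℕ) :
    (Function.support (fun m => ∑ i ∈ Finset.range n, f i m)).Finite := by
  apply Set.Finite.subset (Set.Finite.biUnion (Finset.range n).finite_toSet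
    (fun i _ => hf i))
  intro m hm
  simp only [Function.mem_support, ne_eq] at hm
  by_contra h
  simp only [Set.mem_iUnion, Function.mem_support] at h
  push_neg at h
  exact hm (Finset.sum_eq_zero fun i hi => h i hi)

/-- iterating a convolution inequality. -/
theorem dave_conv_iteration
    (b u : ℤ → ℝ)
    (hb_fin : (Function.support b).Finite)
    (hu_fin : (Function.support u).Finite)
    (hb_nonneg : ∀ k : ℤ, 0 ≤ b k)
    (d : ℕ → ℤ → ℝ)
    (hrec : ∀ (j : ℕ), 1 ≤ j → ∀ k : ℤ, d j k ≤ dconv b (d (j - 1)) k + u k) :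
    ∀ (j : ℕ) (k : ℤ),
      d j k ≤ dconv (dIterConv b j) (d 0) k
        + dconv (fun m => ∑ i ∈ Finset.range j, dIterConv b i m) u k := by
  intro j
  induction j with
  | zero =>
    intro k
    have h1 : dconv (dIterConv b 0) (d 0) k = d 0 k := dconv_dimpulse (d 0) k
    have h2 : dconv (fun m => ∑ i ∈ Finset.range 0, dIterConv b i m) u k = 0 := by
      simp only [Finset.range_zero, Finset.sum_empty, dconv]
      exact finsum_eq_zero_of_forall_eq_zero fun j => by simp
    rw [h1, h2, add_zero]
  | succ j ih =>
    intro k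
    have hIj := dIterConv_support_finite hb_fin
    have hSj : (Function.support (fun m => ∑ i ∈ Finset.range j, dIterConv b i m)).Finite :=
      sum_support_finite hIj j
    have step1 : d (j + 1) k ≤ dconv b (d j) k + u k := by
      have := hrec (j + 1) (Nat.le_add_left 1 j) k
      simpa using this
    have step2 : dconv b (d j) k
        ≤ dconv b (fun m => dconv (dIterConv b j) (d 0) m
            + dconv (fun m' => ∑ i ∈ Finset.range j, dIterConv b i m') u m) k :=
      dconv_mono b _ _ hb_fin hb_nonneg ih k
    rw [dconv_add_right _ _ _ hb_fin k] at step2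
    rw [← dconv_assoc b (dIterConv b j) (d 0) hb_fin (hIj j) k] at step2
    rw [← dconv_assoc b _ u hb_fin hSj k] at step2
    -- identify the two pieces
    have hbS : ∀ m, dconv b (fun m' => ∑ i ∈ Finset.range j, dIterConv b i m') m
        = ∑ i ∈ Finset.range j, dIterConv b (i + 1) m := by
      intro m
      rw [dconv_eq_sum b _ hb_fin.toFinset (by simp) m]
      have : ∀ i ∈ Finset.range j, dIterConv b (i + 1) m
          = ∑ l ∈ hb_fin.toFinset, b l * dIterConv b i (m - l) := by
        intro i _
        show dconv b (dIterConv b i) m = _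
        exact dconv_eq_sum b _ hb_fin.toFinset (by simp) m
      rw [Finset.sum_congr rfl this, Finset.sum_comm]
      exact Finset.sum_congr rfl fun l _ => Finset.mul_sum _ _ _
    have hsplit : dconv (fun m => ∑ i ∈ Finset.range (j + 1), dIterConv b i m) u k
        = u k + dconv (dconv b (fun m' => ∑ i ∈ Finset.range j, dIterConv b i m')) u k := by
      have heq : (fun m => ∑ i ∈ Finset.range (j + 1), dIterConv b i m)
          = fun m => dimpulse m
            + dconv b (fun m' => ∑ i ∈ Finset.range j, dIterConv b i m') m := by
        funext m
        rw [Finset.sum_range_succ', hbS m]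
        simp only [dIterConv]
        ring
      rw [heq, dconv_add_left _ _ u (by
          apply Set.Finite.subset (Set.finite_singleton (0 : ℤ))
          intro m hm
          simp only [dimpulse, Function.mem_support, ne_eq, ite_eq_right_iff,
            one_ne_zero] at hm
          simp [of_not_not fun h => hm fun h0 => (h h0).elim])
        (support_dconv_finite hb_fin hSj) k, dconv_dimpulse u k]
    calc d (j + 1) k ≤ dconv b (d j) k + u k := step1
      _ ≤ (dconv (dconv b (dIterConv b j)) (d 0) k
            + dconv (dconv b (fun m' => ∑ i ∈ Finset.range j, dIterConv b i m')) u k)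
          + u k := by linarith
      _ = dconv (dIterConv b (j + 1)) (d 0) k
            + dconv (fun m => ∑ i ∈ Finset.range (j + 1), dIterConv b i m) u k := by
          rw [hsplit]
          simp only [dIterConv]
          ring
end

section
/- Let G ≥ 2, K ≥ 1, and N ≥ 2 be integers, and set p = 1 − 1/G and q = 1/G as reals. If j is an integer with j ≥ 4·K + log N / log G + 2·√(K · (log N / log G)), then for every integer k with 0 ≤ k < K, (choose j k)·p^k·q^(j−k) < 1/N. -/
/-!
For every `t > 0` we have `C(j,k) t^k ≤ (1 + t)^j ≤ e^{tj}`, hence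
`C(j,k) p^k q^{j-k} ≤ e^{tj} ((G-1)/t)^k G^{-j}`. Take `t = K/J` with `J = 4K + L + 2√(KL)`,
`L = log_G N`. Since `J/K = x² + 2x + 4 ≤ (x+2)²` for `x = √(L/K)`, the logarithm of the bound is
at most `K (1 + log (4(G-1))) + √(KL) - log G · J`, and this is below `-L log G = -log N`
because `4e(G-1) < G⁴` and `2 log G > 1`.
-/

open Real
open scoped Nat

lemma choose_mul_pow_le_exp (m n : ℕ) {t : ℝ} (ht : 0 ≤ t) :
    (m.choose n : ℝ) * t ^ n ≤ exp (t * m) :=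
  calc (m.choose n : ℝ) * t ^ n ≤ (m : ℝ) ^ n / n ! * t ^ n := by
        gcongr; exact Nat.choose_le_pow_div n m
    _ = (t * m) ^ n / n ! := by ring
    _ ≤ exp (t * m) := pow_div_factorial_le_exp _ (by positivity) n

lemma one_add_log_four_mul_sub_one_lt_four_mul_log {G : ℝ} (hG : 2 ≤ G) :
    1 + log (4 * (G - 1)) < 4 * log G := by
  have one_lt_log_three : 1 < log 3 := by
    rw [lt_log_iff_exp_lt (by norm_num)]; linarith [exp_one_lt_d9]
  have hpoly : 3 * (4 * (G - 1)) ≤ G ^ 4 := by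
    nlinarith [mul_nonneg (sub_nonneg.2 hG) (sub_nonneg.2 hG)]
  calc 1 + log (4 * (G - 1)) < log 3 + log (4 * (G - 1)) := by linarith
    _ = log (3 * (4 * (G - 1))) := (log_mul (by norm_num) (by linarith)).symm
    _ ≤ log (G ^ 4) := log_le_log (by linarith) hpoly
    _ = 4 * log G := by rw [log_pow]; norm_num

lemma log_sq_add_two_mul_add_four_le {x : ℝ} (hx : 0 ≤ x) :
    log (x ^ 2 + 2 * x + 4) ≤ 2 * log 2 + x := by
  have h : log ((x + 2) / 2) ≤ x / 2 := by
    linarith [log_le_sub_one_of_pos (x := (x + 2) / 2) (by positivity)]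
  rw [log_div (by positivity) two_ne_zero] at h
  calc log (x ^ 2 + 2 * x + 4) ≤ log ((x + 2) ^ 2) := log_le_log (by positivity) (by nlinarith)
    _ = 2 * log (x + 2) := by rw [log_pow]; norm_num
    _ ≤ 2 * log 2 + x := by linarith

lemma chernoff_exponent_lt {G K L J : ℝ} (hG : 2 ≤ G) (hK : 0 < K) (hL : 0 ≤ L)
    (hJ : J = 4 * K + L + 2 * √(K * L)) :
    K * log ((G - 1) * J / K) + K - log G * J < -(log G * L) := by
  set s := √(K * L)
  have hs : 0 ≤ s := sqrt_nonneg _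
  have hs2 : s ^ 2 = K * L := sq_sqrt (by positivity)
  have hJK : J / K = (s / K) ^ 2 + 2 * (s / K) + 4 := by
    rw [hJ]; field_simp; linear_combination -hs2
  have hlogJ : log ((G - 1) * J / K) ≤ log (4 * (G - 1)) + s / K := by
    have hJ0 : 0 < J / K := by rw [hJK]; positivity
    rw [mul_div_assoc, log_mul (by linarith) hJ0.ne', hJK, log_mul (by norm_num) (by linarith)]
    have := log_sq_add_two_mul_add_four_le (div_nonneg hs hK.le)
    have : log 4 = 2 * log 2 := by
      rw [show (4 : ℝ) = 2 ^ 2 by norm_num, log_pow]; norm_num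
    linarith
  have hlog2 : 1 / 2 < log G := by
    linarith [log_two_gt_d9, log_le_log two_pos hG]
  have hKlog : K * log ((G - 1) * J / K) ≤ K * log (4 * (G - 1)) + s := by
    calc K * log ((G - 1) * J / K) ≤ K * (log (4 * (G - 1)) + s / K) := by gcongr
      _ = K * log (4 * (G - 1)) + s := by field_simp
  have hkey : K * (1 + log (4 * (G - 1))) < K * (4 * log G) :=
    mul_lt_mul_of_pos_left (one_add_log_four_mul_sub_one_lt_four_mul_log hG) hK
  have hs_le : s ≤ 2 * s * log G := by nlinarith
  have hgJ : log G * J = 4 * (K * log G) + log G * L + 2 * s * log G := by rw [hJ]; ring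
  linarith

lemma pow_eq_exp_mul_log {x : ℝ} (hx : 0 < x) (n : ℕ) : x ^ n = exp (n * log x) := by
  rw [exp_nat_mul, exp_log hx]

lemma one_sub_one_div_pow_mul_one_div_pow {G : ℝ} (hG : G ≠ 0) {m n : ℕ} (hnm : n ≤ m) :
    (1 - 1 / G) ^ n * (1 / G) ^ (m - n) = (G - 1) ^ n / G ^ m := by
  obtain ⟨d, rfl⟩ := Nat.exists_eq_add_of_le hnm
  rw [Nat.add_sub_cancel_left, one_sub_div hG, div_pow, one_div_pow, pow_add]
  field_simp

lemma choose_mul_pow_mul_pow_lt {G K L : ℝ} (hG : 2 ≤ G) (hK : 0 < K) (hL : 0 ≤ L) {m n : ℕ}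
    (hnK : (n : ℝ) ≤ K) (hm : 4 * K + L + 2 * √(K * L) ≤ m) :
    (m.choose n : ℝ) * (1 - 1 / G) ^ n * (1 / G) ^ (m - n) < (G ^ L)⁻¹ := by
  set J := 4 * K + L + 2 * √(K * L) with hJ
  have hJ4K : 4 * K ≤ J := by have := sqrt_nonneg (K * L); linarith
  have hJpos : 0 < J := by linarith
  set t := K / J
  have ht : 0 < t := div_pos hK hJpos
  have htJ : t * J = K := div_mul_cancel₀ K hJpos.ne'
  have ht_le : t ≤ log G := by
    have : t ≤ 1 / 4 := by rw [div_le_iff₀ hJpos]; linarith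
    linarith [log_two_gt_d9, log_le_log two_pos hG]
  set r := (G - 1) / t
  have htr : t * r = G - 1 := mul_div_cancel₀ _ ht.ne'
  have hr : 1 ≤ r := by nlinarith
  have hr_eq : r = (G - 1) * J / K := div_div_eq_mul_div _ _ _
  have hnm : n ≤ m := by
    have : (n : ℝ) ≤ m := by linarith
    exact_mod_cast this
  calc (m.choose n : ℝ) * (1 - 1 / G) ^ n * (1 / G) ^ (m - n)
      = (m.choose n : ℝ) * t ^ n * r ^ n / G ^ m := by
        rw [mul_assoc, one_sub_one_div_pow_mul_one_div_pow (by positivity) hnm, mul_assoc,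
          ← mul_pow, htr, mul_div_assoc]
    _ ≤ exp (t * m) * exp (n * log r) / exp (m * log G) := by
        rw [← pow_eq_exp_mul_log (by linarith), ← pow_eq_exp_mul_log (by linarith)]
        gcongr
        exact choose_mul_pow_le_exp m n ht.le
    _ = exp (n * log r + (t - log G) * m) := by
        rw [← exp_add, ← exp_sub]; ring_nf
    _ ≤ exp (K * log r + (t - log G) * J) :=
        exp_le_exp.2 <| add_le_add (mul_le_mul_of_nonneg_right hnK (log_nonneg hr))
          (mul_le_mul_of_nonpos_left hm (by linarith))
    _ < exp (-(log G * L)) := by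
        rw [exp_lt_exp, hr_eq]
        linarith [chernoff_exponent_lt hG hK hL hJ]
    _ = (G ^ L)⁻¹ := by rw [rpow_def_of_pos (by linarith), exp_neg]

/-- after `J = 4K + log_G N + 2√(K·log_G N)` rounds, the binomial
kernel auto-convolution values fall below `1/N`. -/
theorem dave_J_bound
    (G K N : ℕ) (hG : 2 ≤ G) (hK : 1 ≤ K) (hN : 2 ≤ N)
    (p q : ℝ) (hp : p = 1 - 1 / (G : ℝ)) (hq : q = 1 / (G : ℝ))
    (j : ℤ)
    (hj : (4 * K + Real.log N / Real.log G
        + 2 * Real.sqrt ((K : ℝ) * (Real.log N / Real.log G)) : ℝ) ≤ (j : ℝ)) :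
    ∀ k : ℤ, 0 ≤ k → k < (K : ℤ) →
      (Nat.choose j.toNat k.toNat : ℝ) * p ^ k.toNat * q ^ (j.toNat - k.toNat)
        < 1 / (N : ℝ) := by
  intro k _ hkK
  subst hp hq
  have hG' : (2 : ℝ) ≤ G := by exact_mod_cast hG
  have hN' : (1 : ℝ) < N := by exact_mod_cast hN
  have hL : 0 ≤ log N / log G := div_nonneg (log_nonneg hN'.le) (log_nonneg (by linarith))
  have hkK' : (k.toNat : ℝ) ≤ K := by exact_mod_cast (by omega : k.toNat ≤ K)
  have hjm : (j : ℝ) ≤ j.toNat := by exact_mod_cast Int.self_le_toNat j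
  calc _ < ((G : ℝ) ^ logb G N)⁻¹ :=
        choose_mul_pow_mul_pow_lt hG' (by exact_mod_cast hK) hL hkK' (hj.trans hjm)
    _ = 1 / N := by rw [rpow_logb (by linarith) (by linarith) (by linarith), one_div]
end

section
/- Let n and k be natural numbers with k ≤ n, and let p be real with q = 1 − p. Then Σ_{i=0}^{k} i·(choose n i)·p^i·q^(n−i) = n·p·(Σ_{i=0}^{k} (choose n i)·p^i·q^(n−i)) − (n−k)·p·(choose n k)·p^k·q^(n−k). -/
/-!
With `t i = choose n i * p ^ i * q ^ (n - i)`, the ratio of consecutive binomial terms gives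
`(n - i) * p * t i = (i + 1) * q * t (i + 1)`. Hence, when `p + q = 1`,
`(i - n p) t i = g i - g (i + 1)` for `g i = i * q * t i`, and summing over `i ≤ k` telescopes to
`-g (k + 1) = -(n - k) * p * t k`.
-/

open Finset

variable {R : Type*} [CommRing R]

theorem Nat.cast_sub_mul_choose (n i : ℕ) :
    ((n : R) - i) * n.choose i = (i + 1) * n.choose (i + 1) := by
  rcases le_or_gt i n with hin | hni
  · have h : (n - i) * n.choose i = (i + 1) * n.choose (i + 1) := by
      rw [mul_comm, ← Nat.choose_succ_right_eq, mul_comm]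
    simpa [Nat.cast_sub hin] using congrArg (Nat.cast : ℕ → R) h
  · simp [Nat.choose_eq_zero_of_lt hni, Nat.choose_eq_zero_of_lt (hni.trans (Nat.lt_succ_self i))]

theorem sub_mul_choose_mul_pow_mul_pow (n i : ℕ) (p q : R) :
    ((n : R) - i) * p * (n.choose i * p ^ i * q ^ (n - i)) =
      (i + 1 : R) * q * (n.choose (i + 1) * p ^ (i + 1) * q ^ (n - (i + 1))) := by
  rcases lt_or_ge i n with hin | hni
  · obtain ⟨m, rfl⟩ := Nat.exists_eq_add_of_lt hin
    have hchoose := Nat.cast_sub_mul_choose (R := R) (i + m + 1) i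
    rw [show i + m + 1 - i = m + 1 by omega, show i + m + 1 - (i + 1) = m by omega]
    linear_combination p ^ (i + 1) * q ^ (m + 1) * hchoose
  · have hchoose := Nat.cast_sub_mul_choose (R := R) n i
    rw [Nat.choose_eq_zero_of_lt (Nat.lt_succ_of_le hni), Nat.cast_zero] at hchoose ⊢
    linear_combination p ^ (i + 1) * q ^ (n - i) * hchoose

theorem sum_range_sub_mul_mul_choose_mul_pow_mul_pow (n k : ℕ) {p q : R} (hpq : p + q = 1) :
    ∑ i ∈ range (k + 1), ((i : R) - n * p) * (n.choose i * p ^ i * q ^ (n - i)) =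
      -(((n : R) - k) * p * (n.choose k * p ^ k * q ^ (n - k))) := by
  set t : ℕ → R := fun i ↦ n.choose i * p ^ i * q ^ (n - i)
  have hstep (i : ℕ) : ((i : R) - n * p) * t i = i * q * t i - (i + 1 : ℕ) * q * t (i + 1) := by
    simp only [t]
    push_cast
    linear_combination (-(i : R) * t i) * hpq - sub_mul_choose_mul_pow_mul_pow n i p q
  rw [sum_congr rfl fun i _ ↦ hstep i, sum_range_sub' (fun i : ℕ ↦ (i : R) * q * t i)]
  push_cast
  linear_combination sub_mul_choose_mul_pow_mul_pow (R := R) n k p q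

theorem dave_truncated_first_moment_general
    (n k : ℕ) (p q : ℝ) (hq : q = 1 - p) :
    ∑ i ∈ Finset.range (k + 1),
        (i : ℝ) * (Nat.choose n i : ℝ) * p ^ i * q ^ (n - i)
      = (n : ℝ) * p * (∑ i ∈ Finset.range (k + 1),
          (Nat.choose n i : ℝ) * p ^ i * q ^ (n - i))
        - ((n : ℝ) - (k : ℝ)) * p * (Nat.choose n k : ℝ) * p ^ k * q ^ (n - k) := by
  have h := sum_range_sub_mul_mul_choose_mul_pow_mul_pow n k (by rw [hq]; ring : p + q = 1)
  have hsplit : ∑ i ∈ range (k + 1), ((i : ℝ) - n * p) * (n.choose i * p ^ i * q ^ (n - i)) =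
      ∑ i ∈ range (k + 1), (i : ℝ) * n.choose i * p ^ i * q ^ (n - i) -
        n * p * ∑ i ∈ range (k + 1), (n.choose i : ℝ) * p ^ i * q ^ (n - i) := by
    rw [mul_sum, ← sum_sub_distrib]
    exact sum_congr rfl fun i _ ↦ by ring
  linear_combination hsplit.symm.trans h

/-- truncated first-moment identity for binomial weights. -/
theorem dave_truncated_first_moment
    (n k : ℕ) (hkn : k ≤ n) (p q : ℝ) (hq : q = 1 - p) :
    ∑ i ∈ Finset.range (k + 1),
        (i : ℝ) * (Nat.choose n i : ℝ) * p ^ i * q ^ (n - i)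
      = (n : ℝ) * p * (∑ i ∈ Finset.range (k + 1),
          (Nat.choose n i : ℝ) * p ^ i * q ^ (n - i))
        - ((n : ℝ) - (k : ℝ)) * p * (Nat.choose n k : ℝ) * p ^ k * q ^ (n - k) :=
  dave_truncated_first_moment_general n k p q hq
end

section
/- Let k ≥ 0 and s ≥ 1 be integers (so k·s ≥ k), and let p ∈ (0,1) be real with q = 1 − p. Then Σ_{i=0}^{k} (4·(k−i)+1)·(choose (k·s) i)·p^i·q^(k·s−i) = 4·k·(s−1)·p·(choose (k·s) k)·p^k·q^(k·s−k) + (4·k·(1−s·p)+1)·Σ_{i=0}^{k} (choose (k·s) i)·p^i·q^(k·s−i). -/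
lemma dave_key_s9 (n : ℕ) (p : ℝ) :
    ∀ k, k ≤ n →
      ∑ i ∈ Finset.range (k + 1),
          ((i : ℝ) - (n : ℝ) * p) * (Nat.choose n i : ℝ) * p ^ i * (1 - p) ^ (n - i)
        = -(((k : ℝ) + 1) * (Nat.choose n (k + 1) : ℝ) * p ^ (k + 1) * (1 - p) ^ (n - k)) := by
  intro k
  induction k with
  | zero =>
    intro _
    simp [Nat.choose_one_right]
  | succ k ih =>
    intro hk1
    have hk : k ≤ n := Nat.le_of_succ_le hk1
    rw [Finset.sum_range_succ, ih hk]
    have hpow : (1 - p) ^ (n - k) = (1 - p) ^ (n - (k + 1)) * (1 - p) := by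
      rw [← pow_succ]
      congr 1
      omega
    have hch : ((k : ℝ) + 1 + 1) * (Nat.choose n (k + 2) : ℝ)
        = (Nat.choose n (k + 1) : ℝ) * ((n : ℝ) - ((k : ℝ) + 1)) := by
      have := Nat.choose_succ_right_eq n (k + 1)
      have hcast := congrArg (fun m : ℕ => (m : ℝ)) this
      push_cast [Nat.cast_sub hk1] at hcast
      linarith
    rw [hpow]
    push_cast
    linear_combination (p ^ (k + 1) * (1 - p) ^ (n - (k + 1)) * p) * hch

/-- rewriting the ramp-weighted binomial sum. -/
theorem dave_ramp_weighted_sum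
    (k s : ℕ) (hs : 1 ≤ s) (p q : ℝ) (hp0 : 0 < p) (hp1 : p < 1) (hq : q = 1 - p) :
    ∑ i ∈ Finset.range (k + 1),
        (4 * ((k : ℝ) - (i : ℝ)) + 1) * (Nat.choose (k * s) i : ℝ)
          * p ^ i * q ^ (k * s - i)
      = 4 * (k : ℝ) * ((s : ℝ) - 1) * p
            * (Nat.choose (k * s) k : ℝ) * p ^ k * q ^ (k * s - k)
        + (4 * (k : ℝ) * (1 - (s : ℝ) * p) + 1)
            * ∑ i ∈ Finset.range (k + 1),
                (Nat.choose (k * s) i : ℝ) * p ^ i * q ^ (k * s - i) := by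
  subst hq
  set n := k * s with hn
  have hk : k ≤ n := Nat.le_mul_of_pos_right k hs
  have hcastn : ((n : ℝ)) = (k : ℝ) * (s : ℝ) := by push_cast [hn]; ring
  have expand :
      ∑ i ∈ Finset.range (k + 1),
          (4 * ((k : ℝ) - (i : ℝ)) + 1) * (Nat.choose n i : ℝ) * p ^ i * (1 - p) ^ (n - i)
        = (4 * (k : ℝ) + 1 - 4 * (n : ℝ) * p) *
            ∑ i ∈ Finset.range (k + 1),
              (Nat.choose n i : ℝ) * p ^ i * (1 - p) ^ (n - i)
          - 4 * ∑ i ∈ Finset.range (k + 1),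
              ((i : ℝ) - (n : ℝ) * p) * (Nat.choose n i : ℝ) * p ^ i * (1 - p) ^ (n - i) := by
    rw [Finset.mul_sum, Finset.mul_sum, ← Finset.sum_sub_distrib]
    exact Finset.sum_congr rfl fun i _ => by ring
  rw [expand, dave_key_s9 n p k hk]
  have hch : ((k : ℝ) + 1) * (Nat.choose n (k + 1) : ℝ)
      = (Nat.choose n k : ℝ) * ((k : ℝ) * ((s : ℝ) - 1)) := by
    have := Nat.choose_succ_right_eq n k
    have hcast := congrArg (fun m : ℕ => (m : ℝ)) this
    push_cast [Nat.cast_sub hk] at hcast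
    rw [hcastn] at hcast
    linarith
  rw [pow_succ]
  linear_combination (4 * p ^ k * p * (1 - p) ^ (n - k)) * hch
    + (-(4 * p * ∑ i ∈ Finset.range (k + 1),
        (Nat.choose n i : ℝ) * p ^ i * (1 - p) ^ (n - i))) * hcastn
end

section
/- For every integer k ≥ 1 and every real p with 1/2 ≤ p < 1 and q = 1 − p, Σ_{i=0}^{k} (4·(k−i)+1)·(choose (4·k) i)·p^i·q^(4·k−i) < 5.72. -/
/-!
Write `j = k - i`. Going down from the central index `k`, each step divides `(4k choose i)` by
at least `3`, so `(4k choose i) ≤ 3⁻ʲ · 2^{4k}`; and since `pq ≤ 1/4` and `q ≤ 1/2`, every weight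
`p^i q^{4k-i}` with `2i ≤ 4k` is at most `2^{-4k}`. Hence the `i`-th term is at most `(4j+1)/3ʲ`,
and `∑ⱼ (4j+1)/3ʲ < 9/2`.
-/

open Finset

namespace Nat

theorem mul_choose_le_choose_succ {c n i : ℕ} (h : c * (i + 1) ≤ n - i) :
    c * n.choose i ≤ n.choose (i + 1) := by
  refine Nat.le_of_mul_le_mul_right ?_ i.succ_pos
  calc c * n.choose i * (i + 1) = n.choose i * (c * (i + 1)) := by ring
    _ ≤ n.choose i * (n - i) := Nat.mul_le_mul_left _ h
    _ = n.choose (i + 1) * (i + 1) := (choose_succ_right_eq n i).symm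

theorem pow_sub_mul_choose_le_choose {c n i k : ℕ} (hk : (c + 1) * k ≤ n) (hik : i ≤ k) :
    c ^ (k - i) * n.choose i ≤ n.choose k := by
  induction hik using Nat.decreasingInduction with
  | self => simp
  | of_succ i hi ih =>
    have hstep : c * n.choose i ≤ n.choose (i + 1) := by
      refine mul_choose_le_choose_succ ?_
      have : c * (i + 1) ≤ c * k := Nat.mul_le_mul_left c hi
      rw [add_mul, one_mul] at hk
      omega
    calc c ^ (k - i) * n.choose i = c ^ (k - (i + 1)) * (c * n.choose i) := by
          rw [show k - i = k - (i + 1) + 1 by omega, pow_succ]; ring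
      _ ≤ c ^ (k - (i + 1)) * n.choose (i + 1) := Nat.mul_le_mul_left _ hstep
      _ ≤ n.choose k := ih

end Nat

section BinomialWeights

variable {p q : ℝ}

theorem pow_mul_pow_sub_le_half_pow (hq : 0 ≤ q) (hqp : q ≤ p) (hpq : p + q = 1) {i n : ℕ}
    (hi : 2 * i ≤ n) : p ^ i * q ^ (n - i) ≤ (1 / 2) ^ n := by
  have hpq4 : p * q ≤ 1 / 4 := by nlinarith [sq_nonneg (p - q)]
  have hq2 : q ≤ 1 / 2 := by linarith
  calc p ^ i * q ^ (n - i) = (p * q) ^ i * q ^ (n - 2 * i) := by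
        rw [mul_pow, mul_assoc, ← pow_add]; congr 2; omega
    _ ≤ (1 / 4) ^ i * (1 / 2) ^ (n - 2 * i) := by gcongr; nlinarith
    _ = (1 / 2) ^ n := by
        rw [show (1 / 4 : ℝ) = (1 / 2) ^ 2 by norm_num, ← pow_mul, ← pow_add]; congr 1; omega

theorem choose_mul_pow_mul_pow_le_inv_three_pow (hq : 0 ≤ q) (hqp : q ≤ p) (hpq : p + q = 1)
    {i k : ℕ} (hik : i ≤ k) :
    ((4 * k).choose i : ℝ) * p ^ i * q ^ (4 * k - i) ≤ 1 / 3 ^ (k - i) := by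
  have hchoose : (3 ^ (k - i) * (4 * k).choose i : ℝ) ≤ 2 ^ (4 * k) := by
    exact_mod_cast (Nat.pow_sub_mul_choose_le_choose (by omega) hik).trans
      (Nat.choose_le_two_pow _ _)
  have hweight := pow_mul_pow_sub_le_half_pow hq hqp hpq (i := i) (n := 4 * k) (by omega)
  rw [le_div_iff₀ (by positivity)]
  calc ((4 * k).choose i : ℝ) * p ^ i * q ^ (4 * k - i) * 3 ^ (k - i)
      = (3 ^ (k - i) * (4 * k).choose i) * (p ^ i * q ^ (4 * k - i)) := by ring
    _ ≤ 2 ^ (4 * k) * (1 / 2) ^ (4 * k) := by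
        have hp : 0 ≤ p := hq.trans hqp
        gcongr
    _ = 1 := by rw [← mul_pow]; norm_num

end BinomialWeights

theorem sum_range_four_mul_add_one_div_three_pow (n : ℕ) :
    ∑ j ∈ range n, (4 * j + 1 : ℝ) / 3 ^ j = 9 / 2 - (12 * n + 9) / (2 * 3 ^ n) := by
  induction n with
  | zero => norm_num
  | succ n ih =>
    rw [sum_range_succ, ih]
    field_simp
    push_cast
    ring

theorem dave_a_bound_general
    (k : ℕ) (p q : ℝ) (hp : 1 / 2 ≤ p) (hp1 : p < 1) (hq : q = 1 - p) :
    ∑ i ∈ Finset.range (k + 1),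
        (4 * ((k : ℝ) - (i : ℝ)) + 1) * (Nat.choose (4 * k) i : ℝ)
          * p ^ i * q ^ (4 * k - i)
      < 5.72 := by
  have hq0 : 0 ≤ q := by linarith
  have hqp : q ≤ p := by linarith
  have hpq : p + q = 1 := by linarith
  have hterm : ∀ i ∈ range (k + 1),
      (4 * ((k : ℝ) - i) + 1) * ((4 * k).choose i : ℝ) * p ^ i * q ^ (4 * k - i)
        ≤ (4 * ((k - i : ℕ) : ℝ) + 1) / 3 ^ (k - i) := by
    intro i hi
    have hik : i ≤ k := Nat.lt_succ_iff.mp (mem_range.mp hi)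
    rw [← Nat.cast_sub hik, mul_assoc, mul_assoc, ← mul_assoc _ (p ^ i), div_eq_mul_one_div]
    exact mul_le_mul_of_nonneg_left
      (choose_mul_pow_mul_pow_le_inv_three_pow hq0 hqp hpq hik) (by positivity)
  calc _ ≤ ∑ i ∈ range (k + 1), (4 * ((k - i : ℕ) : ℝ) + 1) / 3 ^ (k - i) := sum_le_sum hterm
    _ = ∑ j ∈ range (k + 1), (4 * j + 1 : ℝ) / 3 ^ j :=
        sum_range_reflect (fun j ↦ (4 * (j : ℝ) + 1) / 3 ^ j) (k + 1)
    _ = 9 / 2 - (12 * (k + 1 : ℕ) + 9) / (2 * 3 ^ (k + 1)) :=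
        sum_range_four_mul_add_one_div_three_pow (k + 1)
    _ ≤ 9 / 2 := sub_le_self _ (by positivity)
    _ < 5.72 := by norm_num

/-- the ramp-weighted binomial sum `a[k]` (with s = 4) is below 5.72. -/
theorem dave_a_bound
    (k : ℕ) (hk : 1 ≤ k) (p q : ℝ) (hp : 1 / 2 ≤ p) (hp1 : p < 1) (hq : q = 1 - p) :
    ∑ i ∈ Finset.range (k + 1),
        (4 * ((k : ℝ) - (i : ℝ)) + 1) * (Nat.choose (4 * k) i : ℝ)
          * p ^ i * q ^ (4 * k - i)
      < 5.72 :=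
  dave_a_bound_general k p q hp hp1 hq
end

section
/- For every real x > 0 and every real p with 1/2 ≤ p < 1 and q = 1 − p, 12·x·p·(4·e·p·q^3)^x < 5.72, where the power is the real power function. -/
/-- bound on the continuous relaxation `12·x·p·(4·e·p·q³)^x < 5.72`. -/
theorem dave_continuous_a_bound
    (x : ℝ) (hx : 0 < x) (p q : ℝ) (hp : 1 / 2 ≤ p) (hp1 : p < 1) (hq : q = 1 - p) :
    12 * x * p * (4 * Real.exp 1 * p * q ^ 3) ^ x < 5.72 := by
  have hp0 : 0 < p := by linarith
  have hq0 : 0 < q := by rw [hq]; linarith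
  set c : ℝ := 4 * Real.exp 1 * p * q ^ 3 with hc_def
  have hc : 0 < c := by positivity
  have hlog2 : (0.6931 : ℝ) < Real.log 2 := by
    have := Real.log_two_gt_d9; linarith
  have he : (2.7182 : ℝ) < Real.exp 1 := by
    have := Real.exp_one_gt_d9; linarith
  -- log c = log 4 + 1 + log p + 3 log q
  have hlogc_eq : Real.log c = Real.log 4 + 1 + Real.log p + 3 * Real.log q := by
    rw [hc_def, Real.log_mul (by positivity) (by positivity),
      Real.log_mul (by positivity) (by positivity),
      Real.log_mul (by norm_num) (Real.exp_ne_zero 1),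
      Real.log_exp, Real.log_pow]
    push_cast; ring
  have hlog4 : Real.log 4 = 2 * Real.log 2 := by
    rw [show (4:ℝ) = 2 ^ 2 by norm_num, Real.log_pow]; push_cast; ring
  have hlogp : Real.log p ≤ 2 * p - 1 - Real.log 2 := by
    have h := Real.log_le_sub_one_of_pos (show (0:ℝ) < 2 * p by linarith)
    rw [Real.log_mul (by norm_num) (ne_of_gt hp0)] at h
    linarith
  have hlogq : Real.log q ≤ 1 - 2 * p - Real.log 2 := by
    have h := Real.log_le_sub_one_of_pos (show (0:ℝ) < 2 * q by linarith)
    rw [Real.log_mul (by norm_num) (ne_of_gt hq0)] at h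
    rw [hq] at h ⊢; linarith
  have hlogc : Real.log c ≤ 3 - 4 * p - 2 * Real.log 2 := by
    rw [hlogc_eq, hlog4]; linarith
  set m : ℝ := -Real.log c with hm_def
  have hm_ge : 4 * p - 3 + 2 * Real.log 2 ≤ m := by simp [hm_def]; linarith
  have hm : 0 < m := by
    have : (0:ℝ) < 4 * (1/2) - 3 + 2 * 0.6931 := by norm_num
    nlinarith
  -- key: x * exp (x * log c) ≤ 1 / (e * m)
  have hkey : x * Real.exp (x * Real.log c) ≤ 1 / (Real.exp 1 * m) := by
    have hte : x * m ≤ Real.exp (x * m - 1) := by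
      have := Real.add_one_le_exp (x * m - 1); linarith
    have hxlog : x * Real.log c = -(x * m) := by rw [hm_def]; ring
    rw [hxlog, Real.exp_neg, show x * (Real.exp (x * m))⁻¹ = x / Real.exp (x * m) from by ring,
      div_le_div_iff₀ (Real.exp_pos _) (by positivity)]
    calc x * (Real.exp 1 * m) = (x * m) * Real.exp 1 := by ring
      _ ≤ Real.exp (x * m - 1) * Real.exp 1 := by
          exact mul_le_mul_of_nonneg_right hte (Real.exp_nonneg 1)
      _ = Real.exp (x * m) := by rw [← Real.exp_add]; ring_nf
      _ = 1 * Real.exp (x * m) := by ring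
  have hrpow : c ^ x = Real.exp (x * Real.log c) := by
    rw [Real.rpow_def_of_pos hc]; ring_nf
  rw [hrpow]
  have hchain : 12 * x * p * Real.exp (x * Real.log c)
      ≤ 12 * p * (1 / (Real.exp 1 * m)) := by
    have h12p : (0:ℝ) ≤ 12 * p := by linarith
    calc 12 * x * p * Real.exp (x * Real.log c)
        = 12 * p * (x * Real.exp (x * Real.log c)) := by ring
      _ ≤ 12 * p * (1 / (Real.exp 1 * m)) := by
          exact mul_le_mul_of_nonneg_left hkey h12p
  have hfinal : 12 * p * (1 / (Real.exp 1 * m)) < 5.72 := by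
    have hem : 12 * p < 5.72 * (Real.exp 1 * m) := by
      have h1 : 5.72 * (Real.exp 1 * (4 * p - 3 + 2 * Real.log 2))
          ≤ 5.72 * (Real.exp 1 * m) := by
        have := Real.exp_pos 1
        nlinarith [hm_ge]
      have h2 : 12 * p < 5.72 * (Real.exp 1 * (4 * p - 3 + 2 * Real.log 2)) := by
        nlinarith [hlog2, he, hp, hp1]
      linarith
    calc 12 * p * (1 / (Real.exp 1 * m)) = 12 * p / (Real.exp 1 * m) := by ring
      _ < 5.72 := by
        rw [div_lt_iff₀ (by positivity)]; linarith
  linarith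
end

section
/- Let s and G be real numbers. If either (s ≥ 4 and G ≥ 2) or (s ≥ 3 and G ≥ 3), then G^s > e·s·(G−1), where G^s is the real power and e is Euler's number. -/
/-!
The map `G ↦ G ^ s` lies above its tangent line at `c`, whose slope `s c^(s-1)` beats the slope
`k s` of `G ↦ k s (G - 1)` once `k ≤ c^(s-1)`; so it suffices to have the inequality at `G = c`.
There, `s ↦ c ^ s` lies above its tangent line at an integer `n ≤ s`, and the inequality becomes
a check of finitely many numbers: `(c, n) = (2, 4)` and `(3, 3)` with `k = e`.
-/

open Real

lemma rpow_add_mul_sub_le_rpow {s c G : ℝ} (hc : 0 < c) (hG : 0 ≤ G) (hs : 1 ≤ s) :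
    c ^ s + s * c ^ (s - 1) * (G - c) ≤ G ^ s := by
  have hbernoulli := one_add_mul_self_le_rpow_one_add
    (by linarith [div_nonneg hG hc.le] : (-1 : ℝ) ≤ G / c - 1) hs
  have hscaled := mul_le_mul_of_nonneg_left hbernoulli (rpow_pos_of_pos hc s).le
  rw [add_sub_cancel, ← mul_rpow hc.le (div_nonneg hG hc.le), mul_div_cancel₀ _ hc.ne'] at hscaled
  calc c ^ s + s * c ^ (s - 1) * (G - c)
      = c ^ s * (1 + s * (G / c - 1)) := by rw [rpow_sub_one hc.ne']; field_simp
    _ ≤ G ^ s := hscaled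

lemma rpow_mul_one_add_mul_log_le_rpow {c : ℝ} (hc : 0 < c) (a s : ℝ) :
    c ^ a * (1 + (s - a) * log c) ≤ c ^ s := by
  have hsplit : c ^ s = c ^ a * exp (log c * (s - a)) := by
    rw [← rpow_def_of_pos hc, ← rpow_add hc, add_sub_cancel]
  rw [hsplit]
  gcongr
  linarith [add_one_le_exp (log c * (s - a))]

lemma mul_mul_sub_one_lt_rpow_of_le {k c s : ℝ} (a : ℝ) (hc : 0 < c) (has : a ≤ s)
    (hbase : k * a * (c - 1) < c ^ a) (hslope : k * (c - 1) ≤ c ^ a * log c) :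
    k * s * (c - 1) < c ^ s := by
  have htangent := rpow_mul_one_add_mul_log_le_rpow hc a s
  nlinarith [mul_le_mul_of_nonneg_left hslope (sub_nonneg.2 has)]

lemma mul_mul_sub_one_lt_rpow_of_base {k c G s : ℝ} (hc : 0 < c) (hcG : c ≤ G) (hs : 1 ≤ s)
    (hk : k ≤ c ^ (s - 1)) (hbase : k * s * (c - 1) < c ^ s) :
    k * s * (G - 1) < G ^ s := by
  have htangent := rpow_add_mul_sub_le_rpow hc (hc.le.trans hcG) hs
  have hslope : k * (s * (G - c)) ≤ c ^ (s - 1) * (s * (G - c)) :=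
    mul_le_mul_of_nonneg_right hk (mul_nonneg (by linarith) (sub_nonneg.2 hcG))
  nlinarith

/-- The three conditions on `k`, `c`, `n` only involve natural powers, so they are numerical
checks for concrete values. -/
lemma mul_mul_sub_one_lt_rpow {k c G s : ℝ} (n : ℕ) (hc : 1 ≤ c) (hcG : c ≤ G)
    (hn : 1 ≤ n) (hns : (n : ℝ) ≤ s) (hk : k * c ≤ c ^ n)
    (hbase : k * n * (c - 1) < c ^ n) (hslope : k * (c - 1) ≤ c ^ n * log c) :
    k * s * (G - 1) < G ^ s := by
  have hc₀ : 0 < c := by linarith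
  have hs : 1 ≤ s := le_trans (by exact_mod_cast hn) hns
  have hk' : k ≤ c ^ (s - 1) := by
    rw [rpow_sub_one hc₀.ne', le_div_iff₀ hc₀]
    exact hk.trans (by exact_mod_cast rpow_le_rpow_of_exponent_le hc hns)
  refine mul_mul_sub_one_lt_rpow_of_base hc₀ hcG hs hk' ?_
  exact mul_mul_sub_one_lt_rpow_of_le n hc₀ hns (by exact_mod_cast hbase) (by exact_mod_cast hslope)

/-- `G^s > e·s·(G−1)` when `s ≥ 4, G ≥ 2` or `s ≥ 3, G ≥ 3`. -/
theorem dave_second_derivative_condition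
    (s G : ℝ) (h : (4 ≤ s ∧ 2 ≤ G) ∨ (3 ≤ s ∧ 3 ≤ G)) :
    G ^ s > Real.exp 1 * s * (G - 1) := by
  have he : exp 1 < 2.7182818286 := exp_one_lt_d9
  have hlog2 : 0.6931471803 < log 2 := log_two_gt_d9
  rcases h with ⟨hs, hG⟩ | ⟨hs, hG⟩
  · exact mul_mul_sub_one_lt_rpow 4 (by norm_num) hG (by norm_num) (by exact_mod_cast hs)
      (by linarith) (by norm_num; linarith) (by linarith)
  · have hlog3 : log 2 ≤ log 3 := log_le_log (by norm_num) (by norm_num)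
    exact mul_mul_sub_one_lt_rpow 3 (by norm_num) hG (by norm_num) (by exact_mod_cast hs)
      (by linarith) (by norm_num; linarith) (by linarith)
end

section
/- Let s ≥ 1 and k ≥ 1 be integers and let p ∈ (0,1) be real with q = 1 − p and s·p > 1. Then Σ_{j=0}^{k−1} Σ_{i=0}^{j} (choose (j·s) i)·p^i·q^(j·s−i) < 1/(1 − exp(−2·s·(p − 1/s)^2)). -/
/-!
Hoeffding's lemma bounds the moment generating function of a Bernoulli variable by
`exp (p t + t² / 8)`; the exponential Markov (Chernoff) argument, carried out through the binomial
theorem, then gives the Hoeffding tail bound `Pr[X ≤ j] ≤ exp (-2 (n p - j)² / n)` for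
`X ∼ B(n, p)` and `j ≤ n p`. For `n = j s` this bound is `r ^ j` with
`r = exp (-2 s (p - 1/s)²) < 1`, and the sum over `j < k` is dominated by the geometric series.
-/

open Real Finset MeasureTheory ProbabilityTheory

lemma bernoulli_mgf_le {p : ℝ} (hp₀ : 0 ≤ p) (hp₁ : p ≤ 1) (t : ℝ) :
    p * exp t + (1 - p) ≤ exp (p * t + t ^ 2 / 8) := by
  let μ : Measure ℝ := Ber(1, 0, ⟨p, hp₀, hp₁⟩)
  have hsupp : ∀ᵐ x ∂μ, id x ∈ Set.Icc (0 : ℝ) 1 := by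
    rw [ae_iff]
    exact bernoulliMeasure_apply_of_notMem_of_notMem _ measurableSet_Icc.compl (by simp) (by simp)
  have hoeffding := (hasSubgaussianMGF_of_mem_Icc aemeasurable_id hsupp).mgf_le t
  simp only [μ, mgf, integral_bernoulliMeasure, id, smul_eq_mul] at hoeffding
  norm_num at hoeffding
  calc p * exp t + (1 - p)
      = exp (p * t) * (p * exp (t * (1 - p)) + (1 - p) * exp (-(t * p))) := by
        rw [mul_add, mul_left_comm, ← exp_add, mul_left_comm, ← exp_add]
        ring_nf; simp only [exp_zero]; ring
    _ ≤ exp (p * t) * exp (1 / 4 * t ^ 2 / 2) := by gcongr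
    _ = exp (p * t + t ^ 2 / 8) := by rw [← exp_add]; ring_nf

lemma sum_range_choose_mul_pow_le_exp_mul {p q t : ℝ} (hp : 0 ≤ p) (hq : 0 ≤ q) (ht : 0 ≤ t)
    {n j : ℕ} (hjn : j ≤ n) :
    ∑ i ∈ range (j + 1), (n.choose i : ℝ) * p ^ i * q ^ (n - i)
      ≤ exp (t * j) * (p * exp (-t) + q) ^ n := by
  have hweight : ∀ i ∈ range (j + 1), (1 : ℝ) ≤ exp (t * (j - i)) := fun i hi => by
    have : (i : ℝ) ≤ j := by exact_mod_cast Nat.lt_succ_iff.mp (mem_range.mp hi)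
    exact one_le_exp (mul_nonneg ht (sub_nonneg.mpr this))
  calc ∑ i ∈ range (j + 1), (n.choose i : ℝ) * p ^ i * q ^ (n - i)
      ≤ ∑ i ∈ range (j + 1), exp (t * (j - i)) * ((n.choose i : ℝ) * p ^ i * q ^ (n - i)) :=
        sum_le_sum fun i hi => le_mul_of_one_le_left (by positivity) (hweight i hi)
    _ ≤ ∑ i ∈ range (n + 1), exp (t * (j - i)) * ((n.choose i : ℝ) * p ^ i * q ^ (n - i)) :=
        sum_le_sum_of_subset_of_nonneg (range_subset_range.mpr (by omega))
          fun _ _ _ => by positivity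
    _ = exp (t * j) * (p * exp (-t) + q) ^ n := by
        rw [add_pow, mul_sum]
        refine sum_congr rfl fun i _ => ?_
        have hsplit : exp (t * (j - i)) = exp (t * j) * exp (-t) ^ i := by
          rw [← exp_nat_mul, ← exp_add]; ring_nf
        rw [hsplit, mul_pow]
        ring

theorem binomial_lower_tail_le_exp {p : ℝ} (hp₀ : 0 ≤ p) (hp₁ : p ≤ 1) {n j : ℕ}
    (hj : (j : ℝ) ≤ n * p) :
    ∑ i ∈ range (j + 1), (n.choose i : ℝ) * p ^ i * (1 - p) ^ (n - i)
      ≤ exp (-2 * (n * p - j) ^ 2 / n) := by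
  rcases Nat.eq_zero_or_pos n with rfl | hn
  · obtain rfl : j = 0 := by exact_mod_cast le_antisymm (by simpa using hj) j.cast_nonneg
    simp
  have hn' : (0 : ℝ) < n := by exact_mod_cast hn
  have hjn : j ≤ n := by exact_mod_cast hj.trans (mul_le_of_le_one_right hn'.le hp₁)
  -- the Chernoff parameter minimising `-t (n p - j) + n t² / 8`
  set t := 4 * (n * p - j) / n with ht
  calc ∑ i ∈ range (j + 1), (n.choose i : ℝ) * p ^ i * (1 - p) ^ (n - i)
      ≤ exp (t * j) * (p * exp (-t) + (1 - p)) ^ n :=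
        sum_range_choose_mul_pow_le_exp_mul hp₀ (by linarith) (by positivity) hjn
    _ ≤ exp (t * j) * exp (p * -t + (-t) ^ 2 / 8) ^ n := by
        gcongr
        exact bernoulli_mgf_le hp₀ hp₁ (-t)
    _ = exp (-2 * (n * p - j) ^ 2 / n) := by
        rw [← exp_nat_mul, ← exp_add, ht]
        congr 1
        field_simp
        ring

lemma geom_sum_lt_one_div {K : Type*} [Field K] [LinearOrder K] [IsStrictOrderedRing K] {x : K}
    (hx₀ : 0 < x) (hx₁ : x < 1) (n : ℕ) : ∑ i ∈ range n, x ^ i < 1 / (1 - x) := by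
  rw [geom_sum_eq hx₁.ne, ← neg_div_neg_eq, neg_sub, neg_sub]
  exact div_lt_div_of_pos_right (sub_lt_self 1 (pow_pos hx₀ n)) (sub_pos.mpr hx₁)

theorem dave_tail_geometric_bound_general
    (s k : ℕ) (hs : 1 ≤ s)
    (p q : ℝ) (hp0 : 0 < p) (hp1 : p < 1) (hq : q = 1 - p)
    (hsp : 1 < (s : ℝ) * p) :
    ∑ j ∈ Finset.range k, ∑ i ∈ Finset.range (j + 1),
        (Nat.choose (j * s) i : ℝ) * p ^ i * q ^ (j * s - i)
      < 1 / (1 - Real.exp (-2 * (s : ℝ) * (p - 1 / (s : ℝ)) ^ 2)) := by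
  subst hq
  have hs' : (0 : ℝ) < s := Nat.cast_pos.mpr hs
  set r := exp (-2 * (s : ℝ) * (p - 1 / (s : ℝ)) ^ 2)
  have hr : r < 1 := by
    refine exp_lt_one_iff.mpr (mul_neg_of_neg_of_pos (by linarith) (pow_pos ?_ 2))
    rw [sub_pos, div_lt_iff₀ hs']
    linarith
  have htail : ∀ j : ℕ, ∑ i ∈ range (j + 1),
      (Nat.choose (j * s) i : ℝ) * p ^ i * (1 - p) ^ (j * s - i) ≤ r ^ j := fun j => by
    have hj : (j : ℝ) ≤ ((j * s : ℕ) : ℝ) * p := by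
      push_cast; nlinarith [(j.cast_nonneg : (0 : ℝ) ≤ j)]
    refine (binomial_lower_tail_le_exp hp0.le hp1.le hj).trans_eq ?_
    rw [← exp_nat_mul]
    congr 1
    rcases Nat.eq_zero_or_pos j with rfl | hj0
    · simp
    · push_cast
      field_simp
  calc _ ≤ ∑ j ∈ range k, r ^ j := sum_le_sum fun j _ => htail j
    _ < 1 / (1 - r) := geom_sum_lt_one_div (exp_pos _) hr k

/-- geometric bound on the sum of binomial lower tails. -/
theorem dave_tail_geometric_bound
    (s k : ℕ) (hs : 1 ≤ s) (hk : 1 ≤ k)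
    (p q : ℝ) (hp0 : 0 < p) (hp1 : p < 1) (hq : q = 1 - p)
    (hsp : 1 < (s : ℝ) * p) :
    ∑ j ∈ Finset.range k, ∑ i ∈ Finset.range (j + 1),
        (Nat.choose (j * s) i : ℝ) * p ^ i * q ^ (j * s - i)
      < 1 / (1 - Real.exp (-2 * (s : ℝ) * (p - 1 / (s : ℝ)) ^ 2)) :=
  dave_tail_geometric_bound_general s k hs p q hp0 hp1 hq hsp
end

section
/- For every integer k ≥ 1 and every real p with 1/2 ≤ p < 1 and q = 1 − p, 8·Σ_{j=0}^{k−1} Σ_{i=0}^{j} (choose (4·j) i)·p^i·q^(4·j−i) < 20.34. -/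
/-!
Chernoff bound by exponential tilting: multiplying the `i`-th term of a lower binomial tail
`∑_{i ≤ m} C(n,i) x^i y^(n-i)` by `t^(m-i) ≥ 1` bounds it by `t^m (x/t + y)^n`. With `n = 4j`,
`m = j`, `t = 3` and `p ≥ 1/2` this gives `3^j (2/3)^(4j) = (16/27)^j`, so the double sum is
at most the geometric series `27/11`, and `8 · 27/11 < 20.34`.
-/

open Finset

theorem sum_range_choose_mul_pow_le_tilted {x y t : ℝ} (hx : 0 ≤ x) (hy : 0 ≤ y) (ht : 1 ≤ t)
    {m n : ℕ} (hmn : m ≤ n) :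
    ∑ i ∈ range (m + 1), (n.choose i : ℝ) * x ^ i * y ^ (n - i) ≤ t ^ m * (x / t + y) ^ n := by
  have ht0 : 0 < t := by linarith
  calc ∑ i ∈ range (m + 1), (n.choose i : ℝ) * x ^ i * y ^ (n - i)
      ≤ ∑ i ∈ range (m + 1), t ^ m * ((n.choose i : ℝ) * (x / t) ^ i * y ^ (n - i)) := by
        refine sum_le_sum fun i hi => ?_
        have hti : t ^ i ≤ t ^ m := pow_le_pow_right₀ ht (Nat.lt_succ_iff.mp (mem_range.mp hi))
        calc (n.choose i : ℝ) * x ^ i * y ^ (n - i)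
            = t ^ i * ((n.choose i : ℝ) * (x / t) ^ i * y ^ (n - i)) := by
              rw [div_pow]; field_simp
          _ ≤ _ := by gcongr
    _ ≤ t ^ m * ∑ i ∈ range (n + 1), (n.choose i : ℝ) * (x / t) ^ i * y ^ (n - i) := by
        rw [← mul_sum]
        gcongr
    _ = t ^ m * (x / t + y) ^ n := by
        rw [add_pow]
        congr 1
        exact sum_congr rfl fun i _ => by ring

theorem sum_range_choose_four_mul_le {p : ℝ} (hp : 1 / 2 ≤ p) (hp1 : p ≤ 1) (j : ℕ) :
    ∑ i ∈ range (j + 1), ((4 * j).choose i : ℝ) * p ^ i * (1 - p) ^ (4 * j - i)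
      ≤ (16 / 27 : ℝ) ^ j :=
  calc _ ≤ (3 : ℝ) ^ j * (p / 3 + (1 - p)) ^ (4 * j) :=
        sum_range_choose_mul_pow_le_tilted (by linarith) (by linarith) (by norm_num) (by omega)
    _ ≤ (3 : ℝ) ^ j * (2 / 3) ^ (4 * j) := by
        gcongr
        linarith
    _ = (16 / 27 : ℝ) ^ j := by rw [pow_mul, ← mul_pow]; norm_num

theorem geom_sum_range_le_of_lt_one {r : ℝ} (hr : 0 ≤ r) (hr1 : r < 1) (k : ℕ) :
    ∑ j ∈ range k, r ^ j ≤ 1 / (1 - r) := by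
  simpa only [← range_eq_Ico, pow_zero] using geom_sum_Ico_le_of_lt_one (m := 0) (n := k) hr hr1

theorem dave_aprime_bound_general
    (k : ℕ) (p q : ℝ) (hp : 1 / 2 ≤ p) (hp1 : p < 1) (hq : q = 1 - p) :
    8 * ∑ j ∈ Finset.range k, ∑ i ∈ Finset.range (j + 1),
        (Nat.choose (4 * j) i : ℝ) * p ^ i * q ^ (4 * j - i)
      < 20.34 := by
  subst hq
  have hsum : ∑ j ∈ range k, ∑ i ∈ range (j + 1),
      ((4 * j).choose i : ℝ) * p ^ i * (1 - p) ^ (4 * j - i) ≤ 1 / (1 - 16 / 27) :=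
    (sum_le_sum fun j _ => sum_range_choose_four_mul_le hp hp1.le j).trans
      (geom_sum_range_le_of_lt_one (by norm_num) (by norm_num) k)
  norm_num at hsum ⊢
  linarith

/-- the quantity `a'[k]` (with s = 4) is below 20.34. -/
theorem dave_aprime_bound
    (k : ℕ) (hk : 1 ≤ k) (p q : ℝ) (hp : 1 / 2 ≤ p) (hp1 : p < 1) (hq : q = 1 - p) :
    8 * ∑ j ∈ Finset.range k, ∑ i ∈ Finset.range (j + 1),
        (Nat.choose (4 * j) i : ℝ) * p ^ i * q ^ (4 * j - i)
      < 20.34 :=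
  dave_aprime_bound_general k p q hp hp1 hq
end

section
/- For every integer k ≥ 1 and every real p with 1/2 ≤ p < 1 and q = 1 − p, Σ_{i=0}^{k} (4·(k−i)+1)·(choose (4·k) i)·p^i·q^(4·k−i) + 8·Σ_{j=0}^{k−1} Σ_{i=0}^{j} (choose (4·j) i)·p^i·q^(4·j−i) < 26.05. -/
open Finset

/-- `p^i q^(n-i) ≤ (1/2)^n` when `2i ≤ n`. -/
lemma pq_pow_le (n i : ℕ) (h2 : 2*i ≤ n) (p q : ℝ) (hp : 1/2 ≤ p) (hp1 : p < 1)
    (hq : q = 1 - p) : p ^ i * q ^ (n - i) ≤ (1/2:ℝ) ^ n := by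
  have hq0 : 0 ≤ q := by rw [hq]; linarith
  have hqh : q ≤ 1/2 := by rw [hq]; linarith
  have hp0 : (0:ℝ) ≤ p := by linarith
  have hpq : p * q ≤ 1/4 := by nlinarith [sq_nonneg (p - q)]
  have hsplit : n - i = i + (n - 2*i) := by omega
  rw [hsplit, pow_add, ← mul_assoc]
  have h1 : p ^ i * q ^ i ≤ (1/4:ℝ)^i := by
    rw [← mul_pow]; exact pow_le_pow_left₀ (by positivity) hpq i
  have h2' : q ^ (n - 2*i) ≤ (1/2:ℝ)^(n-2*i) := pow_le_pow_left₀ hq0 hqh _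
  calc p ^ i * q ^ i * q ^ (n - 2*i) ≤ (1/4:ℝ)^i * (1/2)^(n-2*i) := by
        apply mul_le_mul h1 h2' (by positivity) (by positivity)
    _ = (1/2:ℝ)^n := by
        have h4 : (1/4:ℝ) = (1/2)^2 := by norm_num
        rw [h4, ← pow_mul, ← pow_add]
        congr 1; omega

lemma choose_col_le (j : ℕ) : ∀ d i, i + d = j →
    Nat.choose (4*j) i * 3^d ≤ Nat.choose (4*j) j := by
  intro d
  induction d with
  | zero => intro i h; simp [show i = j by omega]
  | succ d ih =>
    intro i h
    have hstep : 3 * Nat.choose (4*j) i ≤ Nat.choose (4*j) (i+1) := by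
      have h1 := Nat.choose_succ_right_eq (4*j) i
      have h2 : 3*(i+1) ≤ 4*j - i := by omega
      have h3 : 3 * Nat.choose (4*j) i * (i+1) ≤ Nat.choose (4*j) (i+1) * (i+1) := by
        rw [h1]
        calc 3 * Nat.choose (4*j) i * (i+1) = Nat.choose (4*j) i * (3*(i+1)) := by ring
          _ ≤ Nat.choose (4*j) i * (4*j - i) := Nat.mul_le_mul_left _ h2
      exact Nat.le_of_mul_le_mul_right h3 (Nat.succ_pos i)
    calc Nat.choose (4*j) i * 3^(d+1) = 3 * Nat.choose (4*j) i * 3^d := by ring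
      _ ≤ Nat.choose (4*j) (i+1) * 3^d := Nat.mul_le_mul_right _ hstep
      _ ≤ Nat.choose (4*j) j := ih (i+1) (by omega)

lemma choose_ratio (j : ℕ) :
    5 * Nat.choose (4*(j+1)) (j+1) ≤ 48 * Nat.choose (4*j) j := by
  have e1' : Nat.choose (4*j) j * (4*j+1) = Nat.choose (4*j+1) j * (3*j+1) := by
    have := Nat.choose_mul_succ_eq (4*j) j
    rwa [show 4*j+1-j = 3*j+1 by omega] at this
  have e2' : Nat.choose (4*j+1) j * (4*j+2) = Nat.choose (4*j+2) j * (3*j+2) := by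
    have := Nat.choose_mul_succ_eq (4*j+1) j
    rwa [show 4*j+1+1 = 4*j+2 by omega, show 4*j+1+1-j = 3*j+2 by omega] at this
  have e3' : Nat.choose (4*j+2) j * (4*j+3) = Nat.choose (4*j+3) j * (3*j+3) := by
    have := Nat.choose_mul_succ_eq (4*j+2) j
    rwa [show 4*j+2+1 = 4*j+3 by omega, show 4*j+2+1-j = 3*j+3 by omega] at this
  have e4' : (4*j+4) * Nat.choose (4*j+3) j = Nat.choose (4*j+4) (j+1) * (j+1) := by
    have := Nat.add_one_mul_choose_eq (4*j+3) j
    simpa [Nat.succ_eq_add_one, show 4*j+3+1 = 4*j+4 by omega] using this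
  set a := Nat.choose (4*j) j with ha
  set b := Nat.choose (4*j+4) (j+1) with hb
  have key : a * ((4*j+1)*(4*j+2)*(4*j+3)*(4*j+4))
      = b * ((j+1)*((3*j+1)*(3*j+2)*(3*j+3))) := by
    calc a * ((4*j+1)*(4*j+2)*(4*j+3)*(4*j+4))
        = (a*(4*j+1)) * ((4*j+2)*(4*j+3)*(4*j+4)) := by ring
      _ = (Nat.choose (4*j+1) j * (3*j+1)) * ((4*j+2)*(4*j+3)*(4*j+4)) := by rw [e1']
      _ = (Nat.choose (4*j+1) j * (4*j+2)) * ((3*j+1)*(4*j+3)*(4*j+4)) := by ring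
      _ = (Nat.choose (4*j+2) j * (3*j+2)) * ((3*j+1)*(4*j+3)*(4*j+4)) := by rw [e2']
      _ = (Nat.choose (4*j+2) j * (4*j+3)) * ((3*j+1)*(3*j+2)*(4*j+4)) := by ring
      _ = (Nat.choose (4*j+3) j * (3*j+3)) * ((3*j+1)*(3*j+2)*(4*j+4)) := by rw [e3']
      _ = ((4*j+4) * Nat.choose (4*j+3) j) * ((3*j+1)*(3*j+2)*(3*j+3)) := by ring
      _ = (b * (j+1)) * ((3*j+1)*(3*j+2)*(3*j+3)) := by rw [e4']
      _ = b * ((j+1)*((3*j+1)*(3*j+2)*(3*j+3))) := by ring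
  have poly : 5*((4*j+1)*(4*j+2)*(4*j+3)*(4*j+4))
      ≤ 48*((j+1)*((3*j+1)*(3*j+2)*(3*j+3))) := by nlinarith [sq_nonneg j, j.zero_le]
  have hD : 0 < (j+1)*((3*j+1)*(3*j+2)*(3*j+3)) := by positivity
  have main : (5*b) * ((j+1)*((3*j+1)*(3*j+2)*(3*j+3)))
      ≤ (48*a) * ((j+1)*((3*j+1)*(3*j+2)*(3*j+3))) := by
    calc (5*b) * ((j+1)*((3*j+1)*(3*j+2)*(3*j+3)))
        = 5 * (b * ((j+1)*((3*j+1)*(3*j+2)*(3*j+3)))) := by ring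
      _ = 5 * (a * ((4*j+1)*(4*j+2)*(4*j+3)*(4*j+4))) := by rw [key]
      _ = a * (5*((4*j+1)*(4*j+2)*(4*j+3)*(4*j+4))) := by ring
      _ ≤ a * (48*((j+1)*((3*j+1)*(3*j+2)*(3*j+3)))) := Nat.mul_le_mul_left _ poly
      _ = (48*a) * ((j+1)*((3*j+1)*(3*j+2)*(3*j+3))) := by ring
  have := Nat.le_of_mul_le_mul_right main hD
  simpa [hb, show 4*(j+1) = 4*j+4 by omega] using this

lemma choose_bound : ∀ j, 1 ≤ j → 12 * 5^j * Nat.choose (4*j) j ≤ 5 * 48^j := by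
  intro j hj
  induction j with
  | zero => omega
  | succ m ih =>
    rcases Nat.eq_or_lt_of_le hj with h1 | h1
    · simp [← h1]
    · have hm : 1 ≤ m := by omega
      have IH := ih hm
      have hr := choose_ratio m
      calc 12 * 5^(m+1) * Nat.choose (4*(m+1)) (m+1)
          = 12 * 5^m * (5 * Nat.choose (4*(m+1)) (m+1)) := by ring
        _ ≤ 12 * 5^m * (48 * Nat.choose (4*m) m) := Nat.mul_le_mul_left _ hr
        _ = 48 * (12 * 5^m * Nat.choose (4*m) m) := by ring
        _ ≤ 48 * (5 * 48^m) := Nat.mul_le_mul_left _ IH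
        _ = 5 * 48^(m+1) := by ring

/-- Real-valued bound on the binomial tail. -/
lemma S_le (p q : ℝ) (hp : 1/2 ≤ p) (hp1 : p < 1) (hq : q = 1 - p)
    (j : ℕ) (hj : 1 ≤ j) :
    ∑ i ∈ Finset.range (j+1), (Nat.choose (4*j) i : ℝ) * p^i * q^(4*j - i)
      ≤ (5/8) * (3/5)^j := by
  have hCj : (Nat.choose (4*j) j : ℝ) ≤ (5/12) * (48/5)^j := by
    have h' : (12:ℝ) * 5^j * (Nat.choose (4*j) j : ℝ) ≤ 5 * 48^j := by
      exact_mod_cast choose_bound j hj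
    have h5 : (0:ℝ) < 5^j := by positivity
    have heq : (5/12:ℝ) * (48/5)^j = (5*48^j)/(12*5^j) := by rw [div_pow]; ring
    rw [heq, le_div_iff₀ (by positivity)]
    nlinarith [h']
  -- termwise bound
  have hterm : ∀ i ∈ Finset.range (j+1),
      (Nat.choose (4*j) i : ℝ) * p^i * q^(4*j - i)
        ≤ (Nat.choose (4*j) j : ℝ) * (1/2)^(4*j) * (1/3)^(j-i) := by
    intro i hi
    have hi' : i ≤ j := by simpa [Nat.lt_succ_iff] using hi
    have hpow := pq_pow_le (4*j) i (by omega) p q hp hp1 hq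
    have hcol := choose_col_le j (j-i) i (by omega)
    have hcol' : (Nat.choose (4*j) i : ℝ) * 3^(j-i) ≤ (Nat.choose (4*j) j : ℝ) := by
      exact_mod_cast hcol
    have h3 : (0:ℝ) < 3^(j-i) := by positivity
    have hCi : (Nat.choose (4*j) i : ℝ) ≤ (Nat.choose (4*j) j : ℝ) * (1/3)^(j-i) := by
      rw [one_div, inv_pow, ← div_eq_mul_inv, le_div_iff₀ h3]
      exact hcol'
    have hterm_pos : (0:ℝ) ≤ p^i * q^(4*j-i) := by
      have : 0 < q := by rw [hq]; linarith
      positivity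
    calc (Nat.choose (4*j) i : ℝ) * p^i * q^(4*j - i)
        = (Nat.choose (4*j) i : ℝ) * (p^i * q^(4*j - i)) := by ring
      _ ≤ ((Nat.choose (4*j) j : ℝ) * (1/3)^(j-i)) * (1/2)^(4*j) := by
          apply mul_le_mul hCi hpow hterm_pos (by positivity)
      _ = (Nat.choose (4*j) j : ℝ) * (1/2)^(4*j) * (1/3)^(j-i) := by ring
  have hsum := Finset.sum_le_sum hterm
  have hgeo : ∑ i ∈ Finset.range (j+1), ((1:ℝ)/3)^(j-i) ≤ 3/2 := by
    have hre : ∑ i ∈ Finset.range (j+1), ((1:ℝ)/3)^(j-i)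
        = ∑ i ∈ Finset.range (j+1), ((1:ℝ)/3)^i := by
      rw [← Finset.sum_range_reflect]
      apply Finset.sum_congr rfl
      intro i hi
      have hi2 : i < j+1 := Finset.mem_range.mp hi
      congr 1
      omega
    rw [hre, geom_sum_eq (by norm_num : (1/3:ℝ) ≠ 1)]
    have : (0:ℝ) ≤ (1/3:ℝ)^(j+1) := by positivity
    rw [div_le_iff_of_neg (by norm_num : (1/3:ℝ) - 1 < 0)]
    linarith
  have hfac : ∑ i ∈ Finset.range (j+1),
      (Nat.choose (4*j) j : ℝ) * (1/2)^(4*j) * (1/3)^(j-i)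
      = (Nat.choose (4*j) j : ℝ) * (1/2)^(4*j)
        * ∑ i ∈ Finset.range (j+1), ((1:ℝ)/3)^(j-i) := by
    rw [Finset.mul_sum]
  have hCpos : (0:ℝ) ≤ (Nat.choose (4*j) j : ℝ) * (1/2)^(4*j) := by positivity
  have h2 : ∑ i ∈ Finset.range (j+1), (Nat.choose (4*j) i : ℝ) * p^i * q^(4*j - i)
      ≤ (Nat.choose (4*j) j : ℝ) * (1/2)^(4*j) * (3/2) := by
    calc ∑ i ∈ Finset.range (j+1), (Nat.choose (4*j) i : ℝ) * p^i * q^(4*j - i)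
        ≤ ∑ i ∈ Finset.range (j+1),
            (Nat.choose (4*j) j : ℝ) * (1/2)^(4*j) * (1/3)^(j-i) := hsum
      _ = (Nat.choose (4*j) j : ℝ) * (1/2)^(4*j)
            * ∑ i ∈ Finset.range (j+1), ((1:ℝ)/3)^(j-i) := hfac
      _ ≤ (Nat.choose (4*j) j : ℝ) * (1/2)^(4*j) * (3/2) :=
          mul_le_mul_of_nonneg_left hgeo hCpos
  have hhalf : ((1:ℝ)/2)^(4*j) = (1/16:ℝ)^j := by
    rw [pow_mul]; norm_num
  have h3 : (Nat.choose (4*j) j : ℝ) * (1/2)^(4*j) * (3/2)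
      ≤ (5/8) * (3/5)^j := by
    rw [hhalf]
    have h16 : (0:ℝ) < (1/16:ℝ)^j := by positivity
    have : (Nat.choose (4*j) j : ℝ) * (1/16)^j ≤ (5/12) * (48/5)^j * (1/16)^j := by
      apply mul_le_mul_of_nonneg_right hCj (le_of_lt h16)
    have heq : (5/12:ℝ) * (48/5)^j * (1/16)^j = (5/12) * (3/5)^j := by
      rw [mul_assoc, ← mul_pow]; norm_num
    nlinarith [this, heq, pow_nonneg (by norm_num : (0:ℝ) ≤ 3/5) j]
  linarith

lemma growth_le (k : ℕ) (hk : 1 ≤ k) : (4*(k:ℝ)+1) * (3/5)^k ≤ 81/25 := by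
  rcases Nat.eq_or_lt_of_le hk with h1 | h1
  · rw [← h1]; norm_num
  · have h2 : 2 ≤ k := h1
    induction k with
    | zero => omega
    | succ m ih =>
      rcases Nat.eq_or_lt_of_le h2 with hm2 | hm2
      · rw [← hm2]; norm_num
      · have hm : 2 ≤ m := by omega
        have IH := ih (by omega) (by omega) hm
        have hmc : (2:ℝ) ≤ (m:ℝ) := by exact_mod_cast hm
        have hpow : (0:ℝ) ≤ (3/5:ℝ)^m := by positivity
        push_cast
        calc (4*((m:ℝ)+1)+1) * (3/5)^(m+1)
            = ((4*(m:ℝ)+5) * (3/5)) * (3/5)^m := by ring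
          _ ≤ (4*(m:ℝ)+1) * (3/5)^m := by nlinarith
          _ ≤ 81/25 := IH

/-- `a[k] + a'[k] < 26.05` (with s = 4). -/
theorem dave_constant_bound
    (k : ℕ) (hk : 1 ≤ k) (p q : ℝ) (hp : 1 / 2 ≤ p) (hp1 : p < 1) (hq : q = 1 - p) :
    (∑ i ∈ Finset.range (k + 1),
        (4 * ((k : ℝ) - (i : ℝ)) + 1) * (Nat.choose (4 * k) i : ℝ)
          * p ^ i * q ^ (4 * k - i))
      + 8 * ∑ j ∈ Finset.range k, ∑ i ∈ Finset.range (j + 1),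
          (Nat.choose (4 * j) i : ℝ) * p ^ i * q ^ (4 * j - i)
      < 26.05 := by
  have hq0 : 0 < q := by rw [hq]; linarith
  have hp0 : (0:ℝ) < p := by linarith
  -- First sum bound
  have first_le : (∑ i ∈ Finset.range (k + 1),
      (4 * ((k : ℝ) - (i : ℝ)) + 1) * (Nat.choose (4 * k) i : ℝ)
        * p ^ i * q ^ (4 * k - i)) ≤ 81/40 := by
    have step1 : (∑ i ∈ Finset.range (k + 1),
        (4 * ((k : ℝ) - (i : ℝ)) + 1) * (Nat.choose (4 * k) i : ℝ)
          * p ^ i * q ^ (4 * k - i))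
        ≤ ∑ i ∈ Finset.range (k + 1),
          (4*(k:ℝ)+1) * ((Nat.choose (4 * k) i : ℝ) * p ^ i * q ^ (4 * k - i)) := by
      apply Finset.sum_le_sum
      intro i hi
      have hi' : i ≤ k := by simpa [Nat.lt_succ_iff] using hi
      have hco : (4 * ((k : ℝ) - (i : ℝ)) + 1) ≤ 4*(k:ℝ)+1 := by
        have : (0:ℝ) ≤ (i:ℝ) := by positivity
        linarith
      have hpos : (0:ℝ) ≤ (Nat.choose (4 * k) i : ℝ) * p ^ i * q ^ (4 * k - i) := by
        positivity
      calc (4 * ((k : ℝ) - (i : ℝ)) + 1) * (Nat.choose (4 * k) i : ℝ)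
            * p ^ i * q ^ (4 * k - i)
          = (4 * ((k : ℝ) - (i : ℝ)) + 1)
              * ((Nat.choose (4 * k) i : ℝ) * p ^ i * q ^ (4 * k - i)) := by ring
        _ ≤ (4*(k:ℝ)+1) * ((Nat.choose (4 * k) i : ℝ) * p ^ i * q ^ (4 * k - i)) :=
            mul_le_mul_of_nonneg_right hco hpos
    have step2 : ∑ i ∈ Finset.range (k + 1),
        (4*(k:ℝ)+1) * ((Nat.choose (4 * k) i : ℝ) * p ^ i * q ^ (4 * k - i))
        = (4*(k:ℝ)+1) * ∑ i ∈ Finset.range (k + 1),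
          (Nat.choose (4 * k) i : ℝ) * p ^ i * q ^ (4 * k - i) := by
      rw [Finset.mul_sum]
    have hS := S_le p q hp hp1 hq k hk
    have hSform : ∑ i ∈ Finset.range (k + 1),
        (Nat.choose (4 * k) i : ℝ) * p ^ i * q ^ (4 * k - i)
        = ∑ i ∈ Finset.range (k+1), (Nat.choose (4*k) i : ℝ) * p^i * q^(4*k - i) := rfl
    have hkpos : (0:ℝ) ≤ 4*(k:ℝ)+1 := by positivity
    have hgrow := growth_le k hk
    calc (∑ i ∈ Finset.range (k + 1),
        (4 * ((k : ℝ) - (i : ℝ)) + 1) * (Nat.choose (4 * k) i : ℝ)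
          * p ^ i * q ^ (4 * k - i))
        ≤ (4*(k:ℝ)+1) * ∑ i ∈ Finset.range (k + 1),
            (Nat.choose (4 * k) i : ℝ) * p ^ i * q ^ (4 * k - i) := by
          rw [← step2]; exact step1
      _ ≤ (4*(k:ℝ)+1) * ((5/8) * (3/5)^k) :=
          mul_le_mul_of_nonneg_left hS hkpos
      _ = (5/8) * ((4*(k:ℝ)+1) * (3/5)^k) := by ring
      _ ≤ (5/8) * (81/25) := by
          apply mul_le_mul_of_nonneg_left hgrow (by norm_num)
      _ = 81/40 := by norm_num
  -- Second sum bound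
  have second_le : (∑ j ∈ Finset.range k, ∑ i ∈ Finset.range (j + 1),
      (Nat.choose (4 * j) i : ℝ) * p ^ i * q ^ (4 * j - i)) ≤ 31/16 := by
    obtain ⟨m, rfl⟩ : ∃ m, k = m + 1 := ⟨k - 1, by omega⟩
    rw [Finset.sum_range_succ']
    have h0 : ∑ i ∈ Finset.range (0 + 1),
        (Nat.choose (4 * 0) i : ℝ) * p ^ i * q ^ (4 * 0 - i) = 1 := by
      simp
    have hrest : ∑ j ∈ Finset.range m, ∑ i ∈ Finset.range (j + 1 + 1),
        (Nat.choose (4 * (j+1)) i : ℝ) * p ^ i * q ^ (4 * (j+1) - i)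
        ≤ ∑ j ∈ Finset.range m, (5/8) * (3/5:ℝ)^(j+1) := by
      apply Finset.sum_le_sum
      intro j _
      exact S_le p q hp hp1 hq (j+1) (by omega)
    have hgeo2 : ∑ j ∈ Finset.range m, (5/8) * (3/5:ℝ)^(j+1) ≤ 15/16 := by
      have : ∑ j ∈ Finset.range m, (5/8) * (3/5:ℝ)^(j+1)
          = (3/8) * ∑ j ∈ Finset.range m, (3/5:ℝ)^j := by
        rw [Finset.mul_sum]; apply Finset.sum_congr rfl; intro j _; ring
      rw [this, geom_sum_eq (by norm_num : (3/5:ℝ) ≠ 1)]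
      have hpw : (0:ℝ) ≤ (3/5:ℝ)^m := by positivity
      rw [mul_comm, ← le_div_iff₀ (by norm_num : (0:ℝ) < 3/8)]
      rw [div_le_iff_of_neg (by norm_num : (3/5:ℝ) - 1 < 0)]
      linarith
    linarith
  have : (0.05 : ℝ) > 0 := by norm_num
  have total : (81/40 : ℝ) + 8 * (31/16) < 26.05 := by norm_num
  nlinarith [first_le, second_le]
end
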